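/- Let q, a, b ∈ ℂ with q ≠ 0, qⁿ ≠ 1 for nonzero n. Then for each n ≥ 0, lim_{b→−∞} p_n(x; −q^{−1} a b^{−1}, b; q) = y_n(x; a; q), where p_n(x; α, β; q) = ₂φ₁(q^{−n}, q^{n+1}αβ; qα; q, qx) is the little q-Jacobi polynomial and y_n(x; a; q) = ₂φ₁(q^{−n}, −a qⁿ; 0; q, qx) is the q-Bessel polynomial. -/

import Mathlib

/-!
After the substitution the little q-Jacobi polynomial is the terminating series
₂φ₁(q^{-n}, -a qⁿ; -a/b; q, qx): only the lower parameter still depends on `b`, and it tends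
to `0`. Each coefficient is continuous in the lower parameter wherever its denominator
(q;q)_k (c;q)_k is nonzero, which at `c = 0` holds because `q` is not a root of unity.
-/

open Finset Filter

/-- q-shifted factorial (a;q)_k -/
noncomputable def qPoch (a q : ℂ) (k : ℕ) : ℂ := ∏ i ∈ range k, (1 - a * q ^ i)

/-- little q-Jacobi polynomial p_n(x;α,β;q) = ₂φ₁(q^{-n}, q^{n+1}αβ; qα; q, qx). -/
noncomputable def littleqJacobi (q α β : ℂ) (n : ℕ) (x : ℂ) : ℂ :=
  ∑ k ∈ range (n + 1),
    qPoch (q ^ (-(n : ℤ))) q k * qPoch (q ^ (n + 1) * α * β) q k /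
      (qPoch q q k * qPoch (q * α) q k) * (q * x) ^ k

/-- q-Bessel polynomial y_n(x;a;q) = ₂φ₁(q^{-n}, -a qⁿ; 0; q, qx);
the lower parameter 0 contributes (0;q)_k = 1. -/
noncomputable def qBessel (q a : ℂ) (n : ℕ) (x : ℂ) : ℂ :=
  ∑ k ∈ range (n + 1),
    qPoch (q ^ (-(n : ℤ))) q k * qPoch (-a * q ^ n) q k / qPoch q q k * (q * x) ^ k

/-- The terminating series ₂φ₁(a₁, a₂; c; q, z), summed up to `z ^ n`. -/
noncomputable def phi21Trunc (a₁ a₂ c q z : ℂ) (n : ℕ) : ℂ :=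
  ∑ k ∈ range (n + 1), qPoch a₁ q k * qPoch a₂ q k / (qPoch q q k * qPoch c q k) * z ^ k

@[simp]
lemma qPoch_zero_left (q : ℂ) (k : ℕ) : qPoch 0 q k = 1 := by
  simp [qPoch]

lemma qPoch_ne_zero {a q : ℂ} {k : ℕ} (h : ∀ i < k, a * q ^ i ≠ 1) : qPoch a q k ≠ 0 :=
  prod_ne_zero_iff.mpr fun i hi => sub_ne_zero.mpr (h i (mem_range.mp hi)).symm

lemma qPoch_self_ne_zero {q : ℂ} (hq : ∀ m : ℤ, m ≠ 0 → q ^ m ≠ 1) (k : ℕ) :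
    qPoch q q k ≠ 0 :=
  qPoch_ne_zero fun i _ => by
    simpa [← pow_succ'] using zpow_natCast q (i + 1) ▸ hq (i + 1 : ℕ) (by positivity)

lemma continuous_qPoch_left (q : ℂ) (k : ℕ) : Continuous fun a => qPoch a q k := by
  unfold qPoch
  fun_prop

lemma continuousAt_phi21Trunc_lower {a₁ a₂ c q z : ℂ} {n : ℕ}
    (h : ∀ k ≤ n, qPoch q q k * qPoch c q k ≠ 0) :
    ContinuousAt (fun c => phi21Trunc a₁ a₂ c q z n) c := by
  unfold phi21Trunc
  refine tendsto_finsetSum _ fun k hk => ?_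
  have hqPoch := (continuous_qPoch_left q k).continuousAt (x := c)
  exact (continuousAt_const.div (continuousAt_const.mul hqPoch)
    (h k (Nat.lt_succ_iff.mp (mem_range.mp hk)))).mul continuousAt_const

lemma qBessel_eq_phi21Trunc (q a : ℂ) (n : ℕ) (x : ℂ) :
    qBessel q a n x = phi21Trunc (q ^ (-(n : ℤ))) (-a * q ^ n) 0 q (q * x) n := by
  simp [qBessel, phi21Trunc]

lemma littleqJacobi_eq_phi21Trunc {q b : ℂ} (hq : q ≠ 0) (hb : b ≠ 0) (a : ℂ) (n : ℕ) (x : ℂ) :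
    littleqJacobi q (-q⁻¹ * a * b⁻¹) b n x =
      phi21Trunc (q ^ (-(n : ℤ))) (-a * q ^ n) (-a * b⁻¹) q (q * x) n := by
  have upper : q ^ (n + 1) * (-q⁻¹ * a * b⁻¹) * b = -a * q ^ n := by
    field_simp
    ring
  have lower : q * (-q⁻¹ * a * b⁻¹) = -a * b⁻¹ := by
    field_simp
  rw [littleqJacobi, phi21Trunc, upper, lower]

theorem littleqJacobi_to_qBessel (q a : ℂ)
    (hq : q ≠ 0) (hq1 : ∀ n : ℤ, n ≠ 0 → q ^ n ≠ 1)
    (n : ℕ) (x : ℂ) :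
    Tendsto (fun b : ℂ => littleqJacobi q (-q⁻¹ * a * b⁻¹) b n x)
      (Bornology.cobounded ℂ) (nhds (qBessel q a n x)) := by
  have lower_tendsto : Tendsto (fun b : ℂ => -a * b⁻¹) (Bornology.cobounded ℂ) (nhds 0) := by
    simpa using (tendsto_inv₀_cobounded (α := ℂ)).const_mul (-a)
  have cont : ContinuousAt (fun c => phi21Trunc (q ^ (-(n : ℤ))) (-a * q ^ n) c q (q * x) n) 0 :=
    continuousAt_phi21Trunc_lower fun k _ => by
      simpa using qPoch_self_ne_zero hq1 k
  rw [qBessel_eq_phi21Trunc]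
  refine (cont.tendsto.comp lower_tendsto).congr' ?_
  filter_upwards [Bornology.eventually_ne_cobounded 0] with b hb
  exact (littleqJacobi_eq_phi21Trunc hq hb a n x).symm
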